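/- Let B be a band and a, b, c ∈ B. If BaB = BcB and BaB ⊆ BbB, then abc = ac. -/
import Mathlib


/-- The principal two-sided ideal `BxB = {u*x*v}` in a semigroup. -/
def prinIdeal {B : Type*} [Semigroup B] (x : B) : Set B := {z | ∃ u v : B, z = u * x * v}

/-- Deletion: in a band, if `BaB = BcB ⊆ BbB`, then `abc = ac`. -/
theorem band_deletion {B : Type*} [Semigroup B] (hband : ∀ x : B, x * x = x)
    (a b c : B) (hac : prinIdeal a = prinIdeal c) (hab : prinIdeal a ⊆ prinIdeal b) :
    a * b * c = a * c := by
  have haa : a ∈ prinIdeal a := ⟨a, a, by rw [hband, hband]⟩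
  obtain ⟨x, y, hxy⟩ := hab haa
  have hacmem : a ∈ prinIdeal c := by rw [← hac]; exact haa
  obtain ⟨s, t, hst⟩ := hacmem
  have hcc : c ∈ prinIdeal c := ⟨c, c, by rw [hband, hband]⟩
  have hca : c ∈ prinIdeal a := by rw [hac]; exact hcc
  obtain ⟨u, v, huv⟩ := hca
  -- F1 : a * b * a = a
  have hA' : a = x * (b * a) := by
    conv_lhs => rw [hxy]
    calc x * b * y = ((x * b) * (x * b)) * y := by rw [hband]
      _ = (x * b) * ((x * b) * y) := by rw [mul_assoc]
      _ = x * (b * (x * b * y)) := by rw [mul_assoc, mul_assoc]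
      _ = x * (b * a) := by rw [← hxy]
  have F1 : a * b * a = a := by
    calc a * b * a = a * (b * a) := by rw [mul_assoc]
      _ = (x * (b * a)) * (b * a) := (show (x * (b * a)) * (b * a) = a * (b * a) by
            rw [← hA']).symm
      _ = x * ((b * a) * (b * a)) := by rw [mul_assoc]
      _ = x * (b * a) := by rw [hband]
      _ = a := hA'.symm
  -- F2 : (s*u) * a = a
  have hk : a = s * u * (a * (v * t)) := by
    conv_lhs => rw [hst, huv]
    simp only [mul_assoc]
  have F2 : s * u * a = a := by
    calc s * u * a = (s * u) * (s * u * (a * (v * t))) := (show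
            (s * u) * (s * u * (a * (v * t))) = s * u * a by rw [← hk]).symm
      _ = ((s * u) * (s * u)) * (a * (v * t)) := by simp only [mul_assoc]
      _ = (s * u) * (a * (v * t)) := by rw [hband]
      _ = a := hk.symm
  -- right-associated rewrite helpers
  have h1 : ∀ z : B, a * (b * (a * z)) = a * z := by
    intro z; simp only [← mul_assoc]; rw [F1]
  have h2 : ∀ z : B, s * (u * (a * z)) = a * z := by
    intro z; simp only [← mul_assoc]; rw [F2]
  have hsq2 : ∀ z : B, u * (a * (u * (a * z))) = u * (a * z) := by
    intro z
    calc u * (a * (u * (a * z))) = ((u * a) * (u * a)) * z := by simp only [mul_assoc]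
      _ = (u * a) * z := by rw [hband]
      _ = u * (a * z) := by rw [mul_assoc]
  have hsq3 : ∀ z : B, u * (a * (b * (u * (a * (b * z))))) = u * (a * (b * z)) := by
    intro z
    calc u * (a * (b * (u * (a * (b * z))))) = ((u * a * b) * (u * a * b)) * z := by
          simp only [mul_assoc]
      _ = (u * a * b) * z := by rw [hband]
      _ = u * (a * (b * z)) := by simp only [mul_assoc]
  rw [huv]
  simp only [mul_assoc]
  calc a * (b * (u * (a * v)))
      = a * (b * (u * (a * (b * (a * v))))) := by rw [h1 v]
    _ = s * (u * (a * (b * (u * (a * (b * (a * v))))))) := by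
          rw [h2 (b * (u * (a * (b * (a * v)))))]
    _ = s * (u * (a * (u * (a * (b * (u * (a * (b * (a * v))))))))) := by
          rw [hsq2 (b * (u * (a * (b * (a * v)))))]
    _ = s * (u * (a * (u * (a * (b * (a * v)))))) := by rw [hsq3 (a * v)]
    _ = a * (u * (a * (b * (a * v)))) := by rw [h2 (u * (a * (b * (a * v))))]
    _ = a * (u * (a * v)) := by rw [h1 v]
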